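/- arXiv:2308.12257 — 7 statements merged into one kernel-verified Lean document; each statement's English description precedes it below -/
import Mathlib

section
/- Let X be a locally compact, locally connected Hausdorff space and f : X² → X a continuous binary operation such that for each t ∈ X the map f_t : X → X, f_t(x) = f(t,x), is a homeomorphism. Then f is invertible in the monoid of continuous binary operations: the map f⁻¹ : X² → X defined by f⁻¹(t,x) = f_t⁻¹(x) is continuous and satisfies f * f⁻¹ = f⁻¹ * f = e. -/
/-!
Fix `t₀`, `y₀ = f t₀ x₀` and a compact neighbourhood `K` of `x₀`. The compact set
`f t₀ '' frontier K` misses `y₀`, so some connected neighbourhood `V` of `y₀` stays away from it,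
and by compactness of `frontier K` it stays away from `f t '' frontier K = frontier (f t '' K)`
for all `t` near `t₀`. If moreover `f t x₀ ∈ V`, connectedness forces `V ⊆ f t '' K`, i.e.
`(f t)⁻¹ y ∈ K` for all `y ∈ V`: the inverse is jointly continuous.
-/

open Set Filter Topology

theorem IsPreconnected.subset_of_disjoint_frontier {X : Type*} [TopologicalSpace X]
    {s t : Set X} (hs : IsPreconnected s) (hst : (s ∩ t).Nonempty)
    (hfr : Disjoint s (frontier t)) : s ⊆ t := by
  have hint : closure t ∩ s ⊆ interior t := by
    rintro x ⟨hxt, hxs⟩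
    rw [closure_eq_interior_union_frontier] at hxt
    exact hxt.resolve_right fun hx => hfr.ne_of_mem hxs hx rfl
  have hsub : s ⊆ interior t :=
    hs.subset_of_closure_inter_subset isOpen_interior
      (hst.mono fun x hx => (⟨hx.1, hint ⟨subset_closure hx.2, hx.1⟩⟩ : x ∈ s ∩ interior t))
      ((inter_subset_inter_left s (closure_mono interior_subset)).trans hint)
  exact hsub.trans interior_subset

theorem eventually_mapsTo_of_continuous_uncurry {T X Y : Type*} [TopologicalSpace T]
    [TopologicalSpace X] [TopologicalSpace Y] {f : T → X → Y}
    (hf : Continuous fun p : T × X => f p.1 p.2) {K : Set X} {U : Set Y} {t₀ : T}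
    (hK : IsCompact K) (hU : IsOpen U) (h₀ : MapsTo (f t₀) K U) :
    ∀ᶠ t in 𝓝 t₀, MapsTo (f t) K U := by
  let F : T → C(X, Y) := fun t => ⟨f t, hf.comp (Continuous.prodMk_right t)⟩
  have hF : Continuous F := ContinuousMap.continuous_of_continuous_uncurry F hf
  exact hF.continuousAt.eventually (ContinuousMap.eventually_mapsTo (f := F t₀) hK hU h₀)

theorem Homeomorph.continuous_symm_of_continuous_uncurry {T X Y : Type*} [TopologicalSpace T]
    [TopologicalSpace X] [TopologicalSpace Y] [LocallyCompactSpace X] [R1Space X]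
    [RegularSpace Y] [LocallyConnectedSpace Y] (h : T → X ≃ₜ Y)
    (hc : Continuous fun p : T × X => h p.1 p.2) :
    Continuous fun p : T × Y => (h p.1).symm p.2 := by
  refine continuous_iff_continuousAt.2 fun ⟨t₀, y₀⟩ => ?_
  set x₀ := (h t₀).symm y₀
  refine (nhds_basis_opens x₀).tendsto_right_iff.2 fun U ⟨hx₀U, hUo⟩ => ?_
  obtain ⟨K, hKc, hx₀K, hKU⟩ := exists_compact_subset hUo hx₀U
  have hFc : IsCompact (frontier K) :=
    hKc.closure.of_isClosed_subset isClosed_frontier frontier_subset_closure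
  have hy₀ : y₀ ∉ h t₀ '' frontier K := by
    rintro ⟨x, hx, hxy⟩
    rw [(h t₀).eq_symm_apply.2 hxy] at hx
    exact hx.2 hx₀K
  obtain ⟨W, hW, hWc, hWC⟩ := exists_mem_nhds_isClosed_subset
    (((h t₀).isClosedMap _ isClosed_frontier).isOpen_compl.mem_nhds hy₀)
  obtain ⟨V, ⟨hVo, hy₀V, hVconn⟩, hVW⟩ :=
    (LocallyConnectedSpace.open_connected_basis y₀).mem_iff.1 hW
  have h_frontier : ∀ᶠ t in 𝓝 t₀, MapsTo (h t) (frontier K) Wᶜ :=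
    eventually_mapsTo_of_continuous_uncurry hc hFc hWc.isOpen_compl
      fun x hx hxW => hWC hxW ⟨x, hx, rfl⟩
  have h_center : ∀ᶠ t in 𝓝 t₀, h t x₀ ∈ V :=
    (hc.comp (Continuous.prodMk_left x₀)).continuousAt.eventually_mem
      (by simpa [x₀] using hVo.mem_nhds hy₀V)
  filter_upwards [prod_mem_nhds (h_frontier.and h_center) (hVo.mem_nhds hy₀V)]
  rintro ⟨t, y⟩ ⟨⟨hmaps, hx₀V⟩, hy⟩
  have hVK : V ⊆ h t '' K := by
    refine hVconn.isPreconnected.subset_of_disjoint_frontier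
      ⟨h t x₀, hx₀V, mem_image_of_mem _ (interior_subset hx₀K)⟩ ?_
    rw [← (h t).image_frontier]
    exact disjoint_left.2 fun z hzV ⟨x, hx, hxz⟩ => hmaps hx (hxz ▸ hVW hzV)
  obtain ⟨x, hx, rfl⟩ := hVK hy
  exact hKU (by simpa using hx)

/-- Invertibility criterion: on a locally compact, locally connected Hausdorff
space, a continuous binary operation whose sections `f t ·` are all
homeomorphisms is invertible in the monoid of continuous binary operations,
with inverse `f⁻¹ t x = (f t)⁻¹ x`. -/
theorem binary_operation_invertible
    {X : Type*} [TopologicalSpace X] [LocallyCompactSpace X]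
    [LocallyConnectedSpace X] [T2Space X]
    (f : X → X → X)
    (hcont : Continuous fun p : X × X => f p.1 p.2)
    (hhomeo : ∀ t : X, IsHomeomorph (f t)) :
    ∃ finv : X → X → X,
      Continuous (fun p : X × X => finv p.1 p.2) ∧
      (∀ t x : X, finv t (f t x) = x) ∧
      (∀ t x : X, f t (finv t x) = x) := by
  let h : X → X ≃ₜ X := fun t => (hhomeo t).homeomorph
  exact ⟨fun t y => (h t).symm y,
    Homeomorph.continuous_symm_of_continuous_uncurry h hcont,
    fun t => (h t).symm_apply_apply, fun t => (h t).apply_symm_apply⟩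
end

section
/- Let X be a distributive binary G-space. Then for every x ∈ X the set G(x,x) = { g(x,x) : g ∈ G } is bi-invariant, i.e., g(h(x,x), k(x,x)) ∈ G(x,x) for all g,h,k ∈ G; in fact g(h(x,x), k(x,x)) = (h g h⁻¹ k)(x,x). -/
/-! Writing `k(x,x) = h(x, (h⁻¹k)(x,x))`, distributivity pulls `h(x, ·)` out of
`g(h(x,x), k(x,x))`, and the action law then collapses
`h(x, g(x, (h⁻¹k)(x,x)))` to `(h g h⁻¹ k)(x,x)`. -/

section BinaryAction

variable {G X : Type*} [Group G] (α : G → X → X → X)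
  (hmul : ∀ (g h : G) (x x' : X), α (g * h) x x' = α g x (α h x x'))
include hmul

theorem binaryAction_eq_apply_inv_mul (h k : G) (x x' : X) :
    α k x x' = α h x (α (h⁻¹ * k) x x') := by
  rw [← hmul, mul_inv_cancel_left]

theorem binaryAction_apply_self_apply_self
    (hdist : ∀ (g h : G) (x x' x'' : X),
      α g (α h x x') (α h x x'') = α h x (α g x' x''))
    (g h k : G) (x : X) :
    α g (α h x x) (α k x x) = α (h * g * h⁻¹ * k) x x := by
  rw [binaryAction_eq_apply_inv_mul α hmul h k, hdist, ← hmul, ← hmul]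
  group

end BinaryAction

theorem orbit_biinvariant_general
    {G X : Type*} [Group G]
    (α : G → X → X → X)
    (hmul : ∀ (g h : G) (x x' : X), α (g * h) x x' = α g x (α h x x'))
    (hdist : ∀ (g h : G) (x x' x'' : X),
      α g (α h x x') (α h x x'') = α h x (α g x' x''))
    (x : X) :
    ∀ g h k : G,
      α g (α h x x) (α k x x) = α (h * g * h⁻¹ * k) x x ∧
      α g (α h x x) (α k x x) ∈ {y : X | ∃ g' : G, y = α g' x x} := by
  intro g h k
  have key := binaryAction_apply_self_apply_self α hmul hdist g h k x
  exact ⟨key, h * g * h⁻¹ * k, key⟩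

/-- In a distributive binary `G`-space, the orbit `G(x,x)` is bi-invariant:
`g(h(x,x), k(x,x)) = (h g h⁻¹ k)(x,x) ∈ G(x,x)`. -/
theorem orbit_biinvariant
    {G X : Type*} [Group G] [TopologicalSpace G] [IsTopologicalGroup G]
    [TopologicalSpace X]
    (α : G → X → X → X)
    (hcont : Continuous fun p : G × X × X => α p.1 p.2.1 p.2.2)
    (hmul : ∀ (g h : G) (x x' : X), α (g * h) x x' = α g x (α h x x'))
    (hone : ∀ (x x' : X), α (1 : G) x x' = x')
    (hdist : ∀ (g h : G) (x x' x'' : X),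
      α g (α h x x') (α h x x'') = α h x (α g x' x''))
    (x : X) :
    ∀ g h k : G,
      α g (α h x x) (α k x x) = α (h * g * h⁻¹ * k) x x ∧
      α g (α h x x) (α k x x) ∈ {y : X | ∃ g' : G, y = α g' x x} :=
  orbit_biinvariant_general α hmul hdist x
end

section
/- In a distributive binary G-space X, any two orbits G(x,x) and G(x',x') either are disjoint or coincide; equivalently, the relation x ∼ y iff y ∈ G(x,x) is an equivalence relation on X. -/
/-!
The relation `y ∈ G(x,x)` is reflexive because `e` acts trivially. Distributivity moves an
element acting at the base point `g(x,x)` back to `x`: `h(g(x,x), g(x,x)) = g(x, h(x,x))`.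
With `h = g⁻¹` this gives symmetry, and for arbitrary `h` it exhibits `h(g(x,x), g(x,x))` as
`(gh)(x,x)`, which gives transitivity. The orbits are then the classes of an equivalence
relation, hence disjoint or equal.
-/

theorem Equivalence.disjoint_or_eq_setOf {X : Type*} {r : X → X → Prop} (hr : Equivalence r)
    (x x' : X) : Disjoint {y | r x y} {y | r x' y} ∨ {y | r x y} = {y | r x' y} := by
  by_cases hxx' : r x x'
  · exact Or.inr (Set.ext fun y => ⟨fun hy => hr.trans (hr.symm hxx') hy, hr.trans hxx'⟩)
  · refine Or.inl (Set.disjoint_left.mpr fun y hy hy' => hxx' ?_)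
    exact hr.trans hy (hr.symm hy')

section BinaryAction

variable {G X : Type*} [Group G] (α : G → X → X → X)

def binaryOrbit (x : X) : Set X := {y | ∃ g : G, y = α g x x}

variable {α}

theorem mem_binaryOrbit_self (hone : ∀ x x' : X, α (1 : G) x x' = x') (x : X) :
    x ∈ binaryOrbit α x :=
  ⟨1, (hone x x).symm⟩

theorem mem_binaryOrbit_symm (hmul : ∀ (g h : G) (x x' : X), α (g * h) x x' = α g x (α h x x'))
    (hone : ∀ x x' : X, α (1 : G) x x' = x')
    (hdist : ∀ (g h : G) (x x' x'' : X), α g (α h x x') (α h x x'') = α h x (α g x' x''))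
    {x y : X} (hy : y ∈ binaryOrbit α x) : x ∈ binaryOrbit α y := by
  obtain ⟨g, rfl⟩ := hy
  exact ⟨g⁻¹, by rw [hdist, ← hmul, mul_inv_cancel, hone]⟩

theorem mem_binaryOrbit_trans (hmul : ∀ (g h : G) (x x' : X), α (g * h) x x' = α g x (α h x x'))
    (hdist : ∀ (g h : G) (x x' x'' : X), α g (α h x x') (α h x x'') = α h x (α g x' x''))
    {x y z : X} (hy : y ∈ binaryOrbit α x) (hz : z ∈ binaryOrbit α y) : z ∈ binaryOrbit α x := by
  obtain ⟨g, rfl⟩ := hy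
  obtain ⟨h, rfl⟩ := hz
  exact ⟨g * h, by rw [hmul, hdist]⟩

theorem equivalence_mem_binaryOrbit
    (hmul : ∀ (g h : G) (x x' : X), α (g * h) x x' = α g x (α h x x'))
    (hone : ∀ x x' : X, α (1 : G) x x' = x')
    (hdist : ∀ (g h : G) (x x' x'' : X), α g (α h x x') (α h x x'') = α h x (α g x' x'')) :
    Equivalence fun x y : X => y ∈ binaryOrbit α x :=
  ⟨mem_binaryOrbit_self hone, mem_binaryOrbit_symm hmul hone hdist,
    mem_binaryOrbit_trans hmul hdist⟩

end BinaryAction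

theorem orbits_disjoint_or_eq_general
    {G X : Type*} [Group G]
    (α : G → X → X → X)
    (hmul : ∀ (g h : G) (x x' : X), α (g * h) x x' = α g x (α h x x'))
    (hone : ∀ (x x' : X), α (1 : G) x x' = x')
    (hdist : ∀ (g h : G) (x x' x'' : X),
      α g (α h x x') (α h x x'') = α h x (α g x' x'')) :
    let orbit : X → Set X := fun x => {y : X | ∃ g : G, y = α g x x}
    (∀ x x' : X, Disjoint (orbit x) (orbit x') ∨ orbit x = orbit x') ∧
    Equivalence (fun x y : X => y ∈ orbit x) :=
  let hequiv := equivalence_mem_binaryOrbit hmul hone hdist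
  ⟨hequiv.disjoint_or_eq_setOf, hequiv⟩

/-- In a distributive binary `G`-space, any two orbits `G(x,x)`, `G(x',x')`
are disjoint or coincide; equivalently, `y ∈ G(x,x)` is an equivalence
relation. -/
theorem orbits_disjoint_or_eq
    {G X : Type*} [Group G] [TopologicalSpace G] [IsTopologicalGroup G]
    [TopologicalSpace X]
    (α : G → X → X → X)
    (hcont : Continuous fun p : G × X × X => α p.1 p.2.1 p.2.2)
    (hmul : ∀ (g h : G) (x x' : X), α (g * h) x x' = α g x (α h x x'))
    (hone : ∀ (x x' : X), α (1 : G) x x' = x')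
    (hdist : ∀ (g h : G) (x x' x'' : X),
      α g (α h x x') (α h x x'') = α h x (α g x' x'')) :
    let orbit : X → Set X := fun x => {y : X | ∃ g : G, y = α g x x}
    (∀ x x' : X, Disjoint (orbit x) (orbit x') ∨ orbit x = orbit x') ∧
    Equivalence (fun x y : X => y ∈ orbit x) :=
  orbits_disjoint_or_eq_general α hmul hone hdist
end

section
/- Let X be a distributive binary G-space and x ∈ X. If g₀(x,x) is any point of the orbit G(x,x), then G(g₀(x,x), g₀(x,x)) = G(x,x); in particular, for any g ∈ G one has g(x,x) = (g₀⁻¹ g)(g₀(x,x), g₀(x,x)). -/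
/-! Distributivity followed by the action law turns `g(g₀(x,x), g₀(x,x))` into `(g₀ g)(x,x)`,
so the orbit of `g₀(x,x)` is the orbit of `(x,x)` reindexed by the bijection `g ↦ g₀ g` of `G`. -/

theorem act_diag_act_diag {G X : Type*} [Mul G] (α : G → X → X → X)
    (hmul : ∀ (g h : G) (x x' : X), α (g * h) x x' = α g x (α h x x'))
    (hdist : ∀ (g h : G) (x x' x'' : X),
      α g (α h x x') (α h x x'') = α h x (α g x' x''))
    (g h : G) (x : X) :
    α g (α h x x) (α h x x) = α (h * g) x x := by
  rw [hdist, hmul]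

theorem orbit_of_orbit_point_general
    {G X : Type*} [Group G]
    (α : G → X → X → X)
    (hmul : ∀ (g h : G) (x x' : X), α (g * h) x x' = α g x (α h x x'))
    (hdist : ∀ (g h : G) (x x' x'' : X),
      α g (α h x x') (α h x x'') = α h x (α g x' x''))
    (x : X) (g₀ : G) :
    {y : X | ∃ g : G, y = α g (α g₀ x x) (α g₀ x x)} =
      {y : X | ∃ g : G, y = α g x x} ∧
    ∀ g : G, α g x x = α (g₀⁻¹ * g) (α g₀ x x) (α g₀ x x) := by
  have key := act_diag_act_diag α hmul hdist
  refine ⟨Set.ext fun y => ?_, fun g => by rw [key, mul_inv_cancel_left]⟩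
  simp only [Set.mem_ofPred_eq, key]
  exact (mul_left_surjective g₀).exists (p := fun g => y = α g x x) |>.symm

/-- In a distributive binary `G`-space, each point of an orbit generates the
same orbit: `G(g₀(x,x), g₀(x,x)) = G(x,x)`, and
`g(x,x) = (g₀⁻¹ g)(g₀(x,x), g₀(x,x))`. -/
theorem orbit_of_orbit_point
    {G X : Type*} [Group G] [TopologicalSpace G] [IsTopologicalGroup G]
    [TopologicalSpace X]
    (α : G → X → X → X)
    (hcont : Continuous fun p : G × X × X => α p.1 p.2.1 p.2.2)
    (hmul : ∀ (g h : G) (x x' : X), α (g * h) x x' = α g x (α h x x'))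
    (hone : ∀ (x x' : X), α (1 : G) x x' = x')
    (hdist : ∀ (g h : G) (x x' x'' : X),
      α g (α h x x') (α h x x'') = α h x (α g x' x''))
    (x : X) (g₀ : G) :
    {y : X | ∃ g : G, y = α g (α g₀ x x) (α g₀ x x)} =
      {y : X | ∃ g : G, y = α g x x} ∧
    ∀ g : G, α g x x = α (g₀⁻¹ * g) (α g₀ x x) (α g₀ x x) :=
  orbit_of_orbit_point_general α hmul hdist x g₀
end

section
/- Let X be a distributive binary G-space (X Hausdorff) and K ⊆ G a compact subset. Then for any closed subset A ⊆ X, the set KA = { g(a,a) : g ∈ K, a ∈ A } is closed in X. -/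
/-!
Distributivity gives `Δ_g ∘ Δ_h = Δ_{hg}`, so the diagonal maps `Δ_g x = g(x,x)` form a continuous
right action of `G` on `X`, i.e. a continuous action of `Gᵐᵒᵖ`. Then `KA` is the pointwise product
of the compact set `op '' K` with the closed set `A`, which is closed for any continuous action.
-/

open MulOpposite Pointwise

abbrev diagonalAction {G X : Type*} [Group G] (α : G → X → X → X)
    (hmul : ∀ (g h : G) (x x' : X), α (g * h) x x' = α g x (α h x x'))
    (hone : ∀ (x x' : X), α (1 : G) x x' = x')
    (hdist : ∀ (g h : G) (x x' x'' : X),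
      α g (α h x x') (α h x x'') = α h x (α g x' x'')) :
    MulAction Gᵐᵒᵖ X where
  smul g x := α g.unop x x
  one_smul x := hone x x
  mul_smul g h x := by
    change α (h.unop * g.unop) x x = α g.unop (α h.unop x x) (α h.unop x x)
    rw [hmul, hdist]

theorem KA_isClosed_general
    {G X : Type*} [Group G] [TopologicalSpace G] [IsTopologicalGroup G]
    [TopologicalSpace X]
    (α : G → X → X → X)
    (hcont : Continuous fun p : G × X × X => α p.1 p.2.1 p.2.2)
    (hmul : ∀ (g h : G) (x x' : X), α (g * h) x x' = α g x (α h x x'))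
    (hone : ∀ (x x' : X), α (1 : G) x x' = x')
    (hdist : ∀ (g h : G) (x x' x'' : X),
      α g (α h x x') (α h x x'') = α h x (α g x' x''))
    (K : Set G) (hK : IsCompact K)
    (A : Set X) (hA : IsClosed A) :
    IsClosed {y : X | ∃ g ∈ K, ∃ a ∈ A, y = α g a a} := by
  let _ := diagonalAction α hmul hone hdist
  have : ContinuousSMul Gᵐᵒᵖ X :=
    ⟨hcont.comp (by fun_prop : Continuous fun p : Gᵐᵒᵖ × X => (p.1.unop, p.2, p.2))⟩
  have hKA : {y : X | ∃ g ∈ K, ∃ a ∈ A, y = α g a a} = (op '' K) • A := by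
    ext y
    simp only [Set.mem_ofPred_eq, Set.mem_smul, Set.exists_mem_image, eq_comm]
    rfl
  rw [hKA]
  exact hA.smul_left_of_isCompact (hK.image continuous_op)

/-- In a Hausdorff distributive binary `G`-space, for a compact `K ⊆ G` and a
closed `A ⊆ X`, the set `KA = { g(a,a) : g ∈ K, a ∈ A }` is closed. -/
theorem KA_isClosed
    {G X : Type*} [Group G] [TopologicalSpace G] [IsTopologicalGroup G]
    [TopologicalSpace X] [T2Space X]
    (α : G → X → X → X)
    (hcont : Continuous fun p : G × X × X => α p.1 p.2.1 p.2.2)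
    (hmul : ∀ (g h : G) (x x' : X), α (g * h) x x' = α g x (α h x x'))
    (hone : ∀ (x x' : X), α (1 : G) x x' = x')
    (hdist : ∀ (g h : G) (x x' x'' : X),
      α g (α h x x') (α h x x'') = α h x (α g x' x''))
    (K : Set G) (hK : IsCompact K)
    (A : Set X) (hA : IsClosed A) :
    IsClosed {y : X | ∃ g ∈ K, ∃ a ∈ A, y = α g a a} :=
  KA_isClosed_general α hcont hmul hone hdist K hK A hA
end

section
/- Let G be a compact topological group and X a Hausdorff distributive binary G-space. Then for any closed A ⊆ X, the union of orbits GA = ⋃_{a∈A} G(a,a) is closed in X. -/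
/-!
`g • y := α g y y` is a right action of `G` on `X`: distributivity gives
`α g (α h y y) (α h y y) = α (h * g) y y`. Hence `y` lies in the orbit of some `a ∈ A` exactly
when `α g y y ∈ A` for some `g`, so `GA` is the projection to `X` of the closed set
`{(g, y) | α g y y ∈ A} ⊆ G × X`, and projecting along a compact factor is a closed map.
-/

section DiagonalAction

variable {G X : Type*} (α : G → X → X → X)

theorem diag_comp_diag [Mul G]
    (hmul : ∀ (g h : G) (x x' : X), α (g * h) x x' = α g x (α h x x'))
    (hdist : ∀ (g h : G) (x x' x'' : X), α g (α h x x') (α h x x'') = α h x (α g x' x''))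
    (g h : G) (y : X) :
    α g (α h y y) (α h y y) = α (h * g) y y := by
  rw [hdist, hmul]

theorem diag_inv_diag [Group G]
    (hmul : ∀ (g h : G) (x x' : X), α (g * h) x x' = α g x (α h x x'))
    (hone : ∀ (x x' : X), α (1 : G) x x' = x')
    (hdist : ∀ (g h : G) (x x' x'' : X), α g (α h x x') (α h x x'') = α h x (α g x' x''))
    (g : G) (y : X) :
    α g⁻¹ (α g y y) (α g y y) = y := by
  rw [diag_comp_diag α hmul hdist, mul_inv_cancel, hone]

theorem biUnion_diag_orbit_eq_image_snd [Group G]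
    (hmul : ∀ (g h : G) (x x' : X), α (g * h) x x' = α g x (α h x x'))
    (hone : ∀ (x x' : X), α (1 : G) x x' = x')
    (hdist : ∀ (g h : G) (x x' x'' : X), α g (α h x x') (α h x x'') = α h x (α g x' x''))
    (A : Set X) :
    ⋃ a ∈ A, {y : X | ∃ g : G, y = α g a a} = Prod.snd '' {p : G × X | α p.1 p.2 p.2 ∈ A} := by
  ext y
  simp only [Set.mem_iUnion, Set.mem_ofPred_eq, Set.mem_image, Prod.exists,
    exists_eq_right, exists_prop]
  constructor
  · rintro ⟨a, ha, g, rfl⟩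
    exact ⟨g⁻¹, by rwa [diag_inv_diag α hmul hone hdist]⟩
  · rintro ⟨g, hg⟩
    exact ⟨α g y y, hg, g⁻¹, (diag_inv_diag α hmul hone hdist g y).symm⟩

end DiagonalAction

theorem GA_isClosed_general
    {G X : Type*} [Group G] [TopologicalSpace G]
    [CompactSpace G] [TopologicalSpace X]
    (α : G → X → X → X)
    (hcont : Continuous fun p : G × X × X => α p.1 p.2.1 p.2.2)
    (hmul : ∀ (g h : G) (x x' : X), α (g * h) x x' = α g x (α h x x'))
    (hone : ∀ (x x' : X), α (1 : G) x x' = x')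
    (hdist : ∀ (g h : G) (x x' x'' : X),
      α g (α h x x') (α h x x'') = α h x (α g x' x''))
    (A : Set X) (hA : IsClosed A) :
    IsClosed (⋃ a ∈ A, {y : X | ∃ g : G, y = α g a a}) := by
  have hdiag : Continuous fun p : G × X => α p.1 p.2 p.2 :=
    hcont.comp (continuous_fst.prodMk (continuous_snd.prodMk continuous_snd))
  rw [biUnion_diag_orbit_eq_image_snd α hmul hone hdist A]
  exact isClosedMap_snd_of_compactSpace _ (hA.preimage hdiag)

/-- For a compact group `G` and a Hausdorff distributive binary `G`-space `X`,
the union of the orbits of points of a closed set `A` is closed. -/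
theorem GA_isClosed
    {G X : Type*} [Group G] [TopologicalSpace G] [IsTopologicalGroup G]
    [CompactSpace G] [TopologicalSpace X] [T2Space X]
    (α : G → X → X → X)
    (hcont : Continuous fun p : G × X × X => α p.1 p.2.1 p.2.2)
    (hmul : ∀ (g h : G) (x x' : X), α (g * h) x x' = α g x (α h x x'))
    (hone : ∀ (x x' : X), α (1 : G) x x' = x')
    (hdist : ∀ (g h : G) (x x' x'' : X),
      α g (α h x x') (α h x x'') = α h x (α g x' x''))
    (A : Set X) (hA : IsClosed A) :
    IsClosed (⋃ a ∈ A, {y : X | ∃ g : G, y = α g a a}) :=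
  GA_isClosed_general α hcont hmul hone hdist A hA
end

section
/- Let G be a compact topological group and X a Hausdorff distributive binary G-space. Then the orbit space X|G (quotient of X by the orbit equivalence relation, with the quotient topology) is Hausdorff. -/
/-!
Distributivity makes the diagonal maps `x ↦ g(x, x)` a continuous right action of `G` on `X`:
`h(g(x, x), g(x, x)) = g(x, h(x, x)) = (gh)(x, x)`. Its orbits are the orbits `G(x, x)`, and a
continuous action of a compact group on a Hausdorff space is proper, so its orbit space is
Hausdorff.
-/

open MulOpposite

theorem properSMul_of_compactSpace {G X : Type*} [Group G] [MulAction G X]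
    [TopologicalSpace G] [TopologicalSpace X] [ContinuousSMul G X] [CompactSpace G]
    [T2Space X] : ProperSMul G X :=
  properSMul_iff_continuousSMul_ultrafilter_tendsto_t2.mpr
    ⟨inferInstance, fun 𝒰 _ _ _ => ⟨_, (𝒰.map Prod.fst).le_nhds_lim⟩⟩

namespace DistribBinaryAction

variable {G X : Type*} [Group G] (α : G → X → X → X)
  (hmul : ∀ (g h : G) (x x' : X), α (g * h) x x' = α g x (α h x x'))
  (hone : ∀ (x x' : X), α (1 : G) x x' = x')
  (hdist : ∀ (g h : G) (x x' x'' : X),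
    α g (α h x x') (α h x x'') = α h x (α g x' x''))

abbrev diagonalMulAction : MulAction Gᵐᵒᵖ X where
  smul g x := α (unop g) x x
  one_smul x := hone x x
  mul_smul g h x := by
    change α (unop h * unop g) x x = α (unop g) (α (unop h) x x) (α (unop h) x x)
    rw [hdist, hmul]

theorem continuousSMul_diagonalMulAction [TopologicalSpace G] [TopologicalSpace X]
    (hcont : Continuous fun p : G × X × X => α p.1 p.2.1 p.2.2) :
    letI := diagonalMulAction α hmul hone hdist
    ContinuousSMul Gᵐᵒᵖ X :=
  letI := diagonalMulAction α hmul hone hdist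
  ⟨hcont.comp ((continuous_unop.comp continuous_fst).prodMk
    (continuous_snd.prodMk continuous_snd))⟩

theorem orbitRel_diagonalMulAction :
    letI := diagonalMulAction α hmul hone hdist
    (fun x y : X => ∃ g : G, y = α g x x) = (MulAction.orbitRel Gᵐᵒᵖ X).r := by
  let _ := diagonalMulAction α hmul hone hdist
  ext x y
  change _ ↔ x ∈ MulAction.orbit Gᵐᵒᵖ y
  rw [MulAction.mem_orbit_symm]
  exact ⟨fun ⟨g, hg⟩ => ⟨op g, hg.symm⟩, fun ⟨g, hg⟩ => ⟨unop g, hg.symm⟩⟩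

end DistribBinaryAction

theorem orbit_space_t2_general
    {G X : Type*} [Group G] [TopologicalSpace G]
    [CompactSpace G] [TopologicalSpace X] [T2Space X]
    (α : G → X → X → X)
    (hcont : Continuous fun p : G × X × X => α p.1 p.2.1 p.2.2)
    (hmul : ∀ (g h : G) (x x' : X), α (g * h) x x' = α g x (α h x x'))
    (hone : ∀ (x x' : X), α (1 : G) x x' = x')
    (hdist : ∀ (g h : G) (x x' x'' : X),
      α g (α h x x') (α h x x'') = α h x (α g x' x'')) :
    T2Space (Quot (fun x y : X => ∃ g : G, y = α g x x)) := by
  let _ := DistribBinaryAction.diagonalMulAction α hmul hone hdist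
  have := DistribBinaryAction.continuousSMul_diagonalMulAction α hmul hone hdist hcont
  have : ProperSMul Gᵐᵒᵖ X := properSMul_of_compactSpace
  rw [DistribBinaryAction.orbitRel_diagonalMulAction α hmul hone hdist]
  exact t2Space_quotient_mulAction_of_properSMul

/-- For a compact group `G` and a Hausdorff distributive binary `G`-space `X`,
the orbit space `X|G` is Hausdorff. -/
theorem orbit_space_t2
    {G X : Type*} [Group G] [TopologicalSpace G] [IsTopologicalGroup G]
    [CompactSpace G] [TopologicalSpace X] [T2Space X]
    (α : G → X → X → X)
    (hcont : Continuous fun p : G × X × X => α p.1 p.2.1 p.2.2)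
    (hmul : ∀ (g h : G) (x x' : X), α (g * h) x x' = α g x (α h x x'))
    (hone : ∀ (x x' : X), α (1 : G) x x' = x')
    (hdist : ∀ (g h : G) (x x' x'' : X),
      α g (α h x x') (α h x x'') = α h x (α g x' x'')) :
    T2Space (Quot (fun x y : X => ∃ g : G, y = α g x x)) :=
  orbit_space_t2_general α hcont hmul hone hdist
end
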